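/- arXiv:1603.06863 — 5 statements merged into one kernel-verified Lean document; each statement's English description precedes it below -/
import Mathlib

section
/- Let K be a perfect field of characteristic 2 and V a finite-dimensional vector space over K with a quadratic form Q that is non-degenerate in the sense that Q does not decompose as Q' ⊕ 0 on a nontrivial direct sum decomposition. Then the set of degenerate vectors (vectors v with B(v,u) = 0 for all u, where B is the polar form) is a subspace of dimension at most 1. -/
open QuadraticMap Module

theorem stmt1 {K V : Type*} [Field K] [AddCommGroup V] [Module K V]
    [FiniteDimensional K V] [PerfectField K] (hchar : ringChar K = 2)
    (Q : QuadraticForm K V)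
    (hQ : ¬ ∃ V₁ V₂ : Submodule K V, IsCompl V₁ V₂ ∧ V₂ ≠ ⊥ ∧
        (∀ y ∈ V₂, Q y = 0) ∧ (∀ x ∈ V₁, ∀ y ∈ V₂, Q (x + y) = Q x)) :
    finrank K ↥(LinearMap.ker (polarBilin Q)) ≤ 1 := by
  have h2 : CharP K 2 := hchar ▸ ringChar.charP K
  have hexp : ExpChar K 2 := ExpChar.prime Nat.prime_two
  set R := LinearMap.ker (polarBilin Q) with hR
  -- every element of R has zero polar form against everything
  have hpol : ∀ v : R, ∀ u : V, polar Q (v : V) u = 0 := by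
    intro v u
    have hv : polarBilin Q (v : V) = 0 := v.2
    rw [← polarBilin_apply_apply, hv]
    rfl
  have hadd : ∀ (a b : V), polar Q a b = 0 → Q (a + b) = Q a + Q b := by
    intro a b h0
    rwa [polar, sub_sub, sub_eq_zero] at h0
  -- define the "square root of Q" linear map on R
  let e := frobeniusEquiv K 2
  have he : ∀ x : K, e x = x ^ 2 := fun x => rfl
  let f : R →ₗ[K] K :=
    { toFun := fun v => e.symm (Q (v : V))
      map_add' := by
        intro u v
        have : Q ((u : V) + (v : V)) = Q (u : V) + Q (v : V) :=
          hadd _ _ (hpol u v)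
        simp [this, map_add]
      map_smul' := by
        intro c v
        show e.symm (Q ((c • v : R) : V)) = (RingHom.id K) c • e.symm (Q (v : V))
        rw [Submodule.coe_smul, QuadraticMap.map_smul, smul_eq_mul,
          RingHom.id_apply, smul_eq_mul, map_mul]
        congr 1
        rw [← _root_.sq, ← he, RingEquiv.symm_apply_apply] }
  by_contra h
  push_neg at h
  have h2le : 2 ≤ finrank K R := h
  -- kernel of f is nontrivial
  have hrn := LinearMap.finrank_range_add_finrank_ker f
  have hrange : finrank K (LinearMap.range f) ≤ 1 := by
    simpa using Submodule.finrank_le (LinearMap.range f)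
  have hker : 1 ≤ finrank K (LinearMap.ker f) := by omega
  have hkerne : LinearMap.ker f ≠ ⊥ := by
    intro hbot
    rw [hbot] at hker
    simp at hker
  obtain ⟨w, hw, hwne⟩ := (Submodule.ne_bot_iff _).mp hkerne
  set V₂ : Submodule K V := (LinearMap.ker f).map R.subtype with hV₂
  have hV₂ne : V₂ ≠ ⊥ := by
    rw [Submodule.ne_bot_iff]
    refine ⟨(w : V), ⟨w, hw, rfl⟩, ?_⟩
    simpa using hwne
  obtain ⟨V₁, hc⟩ := Submodule.exists_isCompl V₂
  apply hQ
  have hQzero : ∀ y ∈ V₂, Q y = 0 := by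
    intro y hy
    obtain ⟨z, hz, rfl⟩ := hy
    have h0 : e.symm (Q (z : V)) = 0 := hz
    have := congrArg e h0
    simpa using this
  refine ⟨V₁, V₂, hc.symm, hV₂ne, hQzero, ?_⟩
  intro x _ y hy
  obtain ⟨z, hz, rfl⟩ := hy
  have hpz : polar Q x (R.subtype z) = 0 := by
    rw [polar_comm]; exact hpol z x
  rw [hadd _ _ hpz, hQzero _ ⟨z, hz, rfl⟩, add_zero]
end

section
/- Let K be a perfect field of characteristic 2 and (V, Q) a finite-dimensional quadratic space with Q non-degenerate (not decomposing as Q' ⊕ 0). Then V contains a nonzero degenerate vector (for the polar form B) if and only if dim V is odd, and in that case the degenerate vectors form a 1-dimensional subspace. -/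
/-!
In characteristic 2 the polar form `B` of `Q` is alternating, so splitting off hyperbolic planes
`span {v, w}` with `B v w ≠ 0` shows `dim ker B ≡ dim V (mod 2)`. The non-decomposability of `Q`
says that the radical `{v ∈ ker B | Q v = 0}` is trivial. If `u, v ∈ ker B` with `u ≠ 0`, then
`Q u ≠ 0`, and choosing a square root `c` of `Q v / Q u` in the perfect field gives
`Q (v + c • u) = Q v + c ^ 2 * Q u = 0`, so `v = -c • u`. Hence `dim ker B ≤ 1`, and the
parity of `dim V` decides between `0` and `1`.
-/

open QuadraticMap Module

namespace LinearMap.BilinForm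

variable {K V : Type*} [Field K] [AddCommGroup V] [Module K V] {B : LinearMap.BilinForm K V}

lemma IsAlt.eq_zero_of_apply_add_eq_zero (hB : B.IsAlt) {v w : V} (hvw : B v w ≠ 0) {a b : K}
    (hv : B (a • v + b • w) v = 0) (hw : B (a • v + b • w) w = 0) : a = 0 ∧ b = 0 := by
  have hwv : B w v = -B v w := (hB.neg_eq v w).symm
  simp only [map_add, map_smul, LinearMap.add_apply, LinearMap.smul_apply, hB.self_eq_zero, hwv,
    smul_eq_mul, mul_zero, zero_add, add_zero, mul_neg, neg_eq_zero] at hv hw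
  exact ⟨(mul_eq_zero.mp hw).resolve_right hvw, (mul_eq_zero.mp hv).resolve_right hvw⟩

lemma IsAlt.finrank_span_pair (hB : B.IsAlt) {v w : V} (hvw : B v w ≠ 0) :
    finrank K (Submodule.span K {v, w}) = 2 := by
  have hli : LinearIndependent K ![v, w] := LinearIndependent.pair_iff.mpr fun a b hab =>
    hB.eq_zero_of_apply_add_eq_zero hvw (by simp [hab]) (by simp [hab])
  have := finrank_span_eq_card hli
  rwa [Matrix.range_cons_cons_empty, Fintype.card_fin] at this

lemma IsAlt.nondegenerate_restrict_span_pair (hB : B.IsAlt) {v w : V} (hvw : B v w ≠ 0) :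
    (B.restrict (Submodule.span K {v, w})).Nondegenerate := by
  have hB' : (B.restrict (Submodule.span K {v, w})).IsAlt := fun x => hB x
  refine hB'.isRefl.nondegenerate_iff_separatingLeft.mpr ?_
  rintro ⟨x, hx⟩ hx0
  obtain ⟨a, b, rfl⟩ := Submodule.mem_span_pair.mp hx
  have hv := hx0 ⟨v, Submodule.subset_span (by simp)⟩
  have hw := hx0 ⟨w, Submodule.subset_span (by simp)⟩
  obtain ⟨rfl, rfl⟩ := hB.eq_zero_of_apply_add_eq_zero hvw hv hw
  simp

lemma map_ker_restrict_orthogonal (hB : B.IsRefl) {W : Submodule K V}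
    (hW : IsCompl W (B.orthogonal W)) :
    (LinearMap.ker (B.restrict (B.orthogonal W))).map (B.orthogonal W).subtype =
      LinearMap.ker B := by
  ext x
  simp only [Submodule.mem_map, LinearMap.mem_ker, Submodule.subtype_apply]
  constructor
  · rintro ⟨y, hy, rfl⟩
    ext u
    obtain ⟨p, hp, q, hq, rfl⟩ :=
      Submodule.mem_sup.mp (hW.sup_eq_top ▸ Submodule.mem_top (x := u))
    have hyq : B y q = 0 := by
      simpa using LinearMap.congr_fun hy (⟨q, hq⟩ : B.orthogonal W)
    simp [hB _ _ (y.2 p hp), hyq]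
  · intro hx
    refine ⟨⟨x, fun p _ => hB _ _ (by simp [hx])⟩, ?_, rfl⟩
    ext y
    simp [hx]

theorem IsAlt.finrank_ker_modEq [FiniteDimensional K V] (hB : B.IsAlt) :
    finrank K (LinearMap.ker B) ≡ finrank K V [MOD 2] := by
  induction hn : finrank K V using Nat.strong_induction_on generalizing V with
  | _ n ih =>
  by_cases hB0 : B = 0
  · rw [hB0, LinearMap.ker_zero, finrank_top, hn]
  obtain ⟨v, w, hvw⟩ : ∃ v w, B v w ≠ 0 := by
    by_contra! h
    exact hB0 (LinearMap.ext₂ h)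
  have hcompl := isCompl_orthogonal_of_restrict_nondegenerate hB.isRefl
    (hB.nondegenerate_restrict_span_pair hvw)
  have hdim := Submodule.finrank_add_eq_of_isCompl hcompl
  rw [hB.finrank_span_pair hvw] at hdim
  have hU := ih _ (by omega) (B := B.restrict (B.orthogonal (Submodule.span K {v, w})))
    (fun x => hB x) rfl
  rw [← map_ker_restrict_orthogonal hB.isRefl hcompl, Submodule.finrank_map_subtype_eq]
  unfold Nat.ModEq at hU ⊢
  omega

end LinearMap.BilinForm

namespace QuadraticMap

lemma isAlt_polarBilin_of_charTwo {R M : Type*} [CommRing R] [CharP R 2] [AddCommGroup M]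
    [Module R M] (Q : QuadraticForm R M) : (polarBilin Q).IsAlt := fun x => by
  rw [polarBilin_apply_apply, polar_self, two_nsmul, CharTwo.add_self_eq_zero]

variable {K V : Type*} [Field K] [PerfectField K] [CharP K 2] [AddCommGroup V] [Module K V]
  {Q : QuadraticForm K V}

lemma mem_span_singleton_of_mem_ker_polarBilin (hQ : Q.radical = ⊥) {u v : V}
    (hu : u ∈ LinearMap.ker (polarBilin Q)) (hu0 : u ≠ 0)
    (hv : v ∈ LinearMap.ker (polarBilin Q)) :
    v ∈ K ∙ u := by
  have hQu : Q u ≠ 0 := by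
    intro h
    have hurad : u ∈ Q.radical := ⟨h, hu⟩
    exact hu0 (by rwa [hQ, Submodule.mem_bot] at hurad)
  obtain ⟨c, hc⟩ := surjective_frobenius K 2 (Q v / Q u)
  have hcu : Q (c • u) = Q v := by
    rw [QuadraticMap.map_smul, smul_eq_mul, ← pow_two, ← frobenius_def, hc,
      div_mul_cancel₀ _ hQu]
  have hrad : v + c • u ∈ Q.radical := by
    refine ⟨?_, by simp [LinearMap.mem_ker.mp hu, LinearMap.mem_ker.mp hv]⟩
    have hvu : polar Q v (c • u) = 0 := by
      rw [← polarBilin_apply_apply, LinearMap.mem_ker.mp hv, LinearMap.zero_apply]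
    rw [QuadraticMap.map_add Q, hcu, hvu, add_zero, CharTwo.add_self_eq_zero]
  rw [hQ, Submodule.mem_bot, add_eq_zero_iff_eq_neg, ← neg_smul] at hrad
  exact hrad ▸ Submodule.smul_mem _ _ (Submodule.mem_span_singleton_self u)

lemma finrank_ker_polarBilin_le_one [FiniteDimensional K V] (hQ : Q.radical = ⊥) :
    finrank K (LinearMap.ker (polarBilin Q)) ≤ 1 := by
  by_cases hbot : LinearMap.ker (polarBilin Q) = ⊥
  · rw [hbot, finrank_bot]
    exact zero_le_one
  obtain ⟨u, hu, hu0⟩ := Submodule.exists_mem_ne_zero_of_ne_bot hbot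
  calc finrank K (LinearMap.ker (polarBilin Q)) ≤ finrank K (K ∙ u) :=
        Submodule.finrank_mono fun v hv => mem_span_singleton_of_mem_ker_polarBilin hQ hu hu0 hv
    _ = 1 := finrank_span_singleton hu0

end QuadraticMap

theorem stmt3 {K V : Type*} [Field K] [AddCommGroup V] [Module K V]
    [FiniteDimensional K V] [PerfectField K] (hchar : ringChar K = 2)
    (Q : QuadraticForm K V)
    (hQ : ¬ ∃ V₁ V₂ : Submodule K V, IsCompl V₁ V₂ ∧ V₂ ≠ ⊥ ∧
        (∀ y ∈ V₂, Q y = 0) ∧ (∀ x ∈ V₁, ∀ y ∈ V₂, Q (x + y) = Q x)) :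
    ((∃ v : V, v ≠ 0 ∧ ∀ u : V, polar Q v u = 0) ↔ Odd (finrank K V)) ∧
      (Odd (finrank K V) → finrank K ↥(LinearMap.ker (polarBilin Q)) = 1) := by
  have := ringChar.of_eq hchar
  have hrad : Q.radical = ⊥ := by
    by_contra hne
    obtain ⟨V₁, hV₁⟩ := Submodule.exists_isCompl Q.radical
    exact hQ ⟨V₁, Q.radical, hV₁.symm, hne, fun y hy => (mem_radical_iff'.mp hy).1,
      fun x _ y hy => by rw [add_comm, (mem_radical_iff'.mp hy).2]⟩
  have hle := finrank_ker_polarBilin_le_one hrad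
  have hpar := LinearMap.BilinForm.IsAlt.finrank_ker_modEq (isAlt_polarBilin_of_charTwo Q)
  have hex : (∃ v : V, v ≠ 0 ∧ ∀ u : V, polar Q v u = 0) ↔
      1 ≤ finrank K (LinearMap.ker (polarBilin Q)) := by
    simp [Submodule.one_le_finrank_iff, Submodule.ne_bot_iff, LinearMap.ext_iff, and_comm]
  rw [hex, Nat.odd_iff]
  unfold Nat.ModEq at hpar
  refine ⟨⟨?_, ?_⟩, ?_⟩ <;> intro <;> omega
end

section
/- Let (V, Q) be a finite-dimensional quadratic space over a field K whose polar form B has trivial radical. A generalized orthogonal set is a linearly independent set S of vectors containing some disjoint pairs (u,v) with B(u,u) = B(v,v) = 0 and B(u,v) = 1 (symplectic couples), such that any two vectors of S not forming one of these couples are orthogonal. Then any generalized orthogonal set extends to a generalized orthogonal basis of V. -/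
open QuadraticMap

/-- `S` is a generalized orthogonal set with set of symplectic couples `C`
for the polar form of `Q`. -/
def IsGenOrthSet {K V : Type*} [Field K] [AddCommGroup V] [Module K V]
    (Q : QuadraticForm K V) (S : Set V) (C : Set (V × V)) : Prop :=
  (∀ p ∈ C, p.1 ∈ S ∧ p.2 ∈ S ∧ p.1 ≠ p.2 ∧
      polar Q p.1 p.1 = 0 ∧ polar Q p.2 p.2 = 0 ∧ polar Q p.1 p.2 = 1) ∧
  (∀ p ∈ C, ∀ q ∈ C, p ≠ q →
      p.1 ≠ q.1 ∧ p.1 ≠ q.2 ∧ p.2 ≠ q.1 ∧ p.2 ≠ q.2) ∧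
  (∀ u ∈ S, ∀ v ∈ S, u ≠ v → (u, v) ∉ C → (v, u) ∉ C → polar Q u v = 0)

/-!
Induct on the codimension of `span S`. If some isotropic `x ∈ S` lies in no couple, then `x` is
orthogonal to all of `S`; nondegeneracy gives `y` with `B y x = 1` and `y ⟂ S \ {x}`, and
`y - Q y • x` is isotropic and forms a new couple with `x`; it lies outside `span S` because
`x ⟂ span S`. Otherwise every `s ∈ S` has a partner in `S` (itself if anisotropic, its couple mate
if isotropic) that pairs nontrivially with `s` and with no other vector of `S`, so `B` is
nondegenerate on `span S` and any nonzero vector of its orthogonal complement can be added.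
-/

open Module Submodule

namespace LinearMap.BilinForm

variable {R M : Type*} [CommRing R] [IsDomain R] [AddCommGroup M] [Module R M]

theorem eq_zero_of_mem_span_of_forall_exists_partner {B : LinearMap.BilinForm R M}
    {S T : Set M}
    (hpartner : ∀ s ∈ S, ∃ t ∈ T, B s t ≠ 0 ∧ ∀ s' ∈ S, s' ≠ s → B s' t = 0)
    {x : M} (hx : x ∈ span R S) (hxT : ∀ t ∈ T, B x t = 0) : x = 0 := by
  obtain ⟨c, hcS, rfl⟩ := mem_span_set.mp hx
  suffices c = 0 by simp [this]
  ext s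
  by_contra hcs
  obtain ⟨t, htT, hst, ht⟩ := hpartner s (hcS (Finsupp.mem_support_iff.mpr hcs))
  have hsum : (c.sum fun s' a => a • s') = ∑ s' ∈ c.support, c s' • s' := rfl
  have : B (c.sum fun s' a => a • s') t = c s * B s t := by
    rw [hsum, map_sum, LinearMap.sum_apply, Finset.sum_eq_single s]
    · simp
    · intro s' hs' hne
      simp [ht s' (hcS hs') hne]
    · exact fun h => absurd (Finsupp.mem_support_iff.mpr hcs) h
  exact mul_ne_zero hcs hst (this ▸ hxT t htT)

end LinearMap.BilinForm

section BilinForm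

variable {K V : Type*} [Field K] [AddCommGroup V] [Module K V] [FiniteDimensional K V]
  {B : LinearMap.BilinForm K V}

theorem LinearMap.BilinForm.Nondegenerate.exists_apply_eq_one_of_linearIndependent
    (hB : B.Nondegenerate) {S : Set V} (hS : LinearIndependent K ((↑) : S → V)) {x₀ : V}
    (hx₀ : x₀ ∈ S) :
    ∃ y : V, B y x₀ = 1 ∧ ∀ s ∈ S, s ≠ x₀ → B y s = 0 := by
  classical
  -- plain `id` would resolve to `LinearMap.id` inside this declaration's namespace
  replace hS : LinearIndepOn K _root_.id S := hS
  let b := Basis.extend hS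
  have := Module.Finite.finite_basis (R := K) b
  have hext : S ⊆ hS.extend (Set.subset_univ S) := hS.subset_extend _
  have hy (s : V) (hs : s ∈ S) := B.apply_dualBasis_left hB b ⟨x₀, hext hx₀⟩ ⟨s, hext hs⟩
  refine ⟨B.dualBasis hB b ⟨x₀, hext hx₀⟩, ?_, fun s hs hne => ?_⟩
  · simpa [b, Basis.extend_apply_self] using hy x₀ hx₀
  · simpa [b, Basis.extend_apply_self, hne] using hy s hs

theorem LinearMap.BilinForm.Nondegenerate.exists_mem_orthogonal_notMem (hB : B.Nondegenerate)
    {W : Submodule K V} (hW : W ≠ ⊤) (hdisj : Disjoint W (B.orthogonal W)) :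
    ∃ w ∈ B.orthogonal W, w ∉ W := by
  have hpos : 0 < finrank K (B.orthogonal W) := by
    rw [finrank_orthogonal hB]
    exact Nat.sub_pos_of_lt (finrank_lt hW)
  obtain ⟨w, hw, hw0⟩ := exists_mem_ne_zero_of_ne_bot (Submodule.one_le_finrank_iff.mp hpos)
  exact ⟨w, hw, fun hwW => hw0 (disjoint_def.mp hdisj w hwW hw)⟩

end BilinForm

section polar

variable {K V : Type*} [Field K] [AddCommGroup V] [Module K V] (Q : QuadraticForm K V)

theorem QuadraticMap.isRefl_polarBilin : (polarBilin Q).IsRefl := fun x y h => by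
  rwa [polarBilin_apply_apply, polar_comm, ← polarBilin_apply_apply]

theorem QuadraticMap.nondegenerate_polarBilin
    (hnd : ∀ v : V, (∀ u : V, polar Q v u = 0) → v = 0) :
    LinearMap.BilinForm.Nondegenerate (polarBilin Q) :=
  (isRefl_polarBilin Q).nondegenerate_iff_separatingLeft.mpr hnd

end polar

namespace IsGenOrthSet

variable {K V : Type*} [Field K] [AddCommGroup V] [Module K V]
  {Q : QuadraticForm K V} {S : Set V} {C : Set (V × V)}

theorem polar_eq_zero_of_unpaired (hS : IsGenOrthSet Q S C) {s t : V} (hs : s ∈ S) (ht : t ∈ S)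
    (hst : s ≠ t) (htC : ∀ p ∈ C, p.1 ≠ t ∧ p.2 ≠ t) : polar Q s t = 0 :=
  hS.2.2 s hs t ht hst (fun h => (htC _ h).2 rfl) (fun h => (htC _ h).1 rfl)

theorem unpaired_of_polar_self_ne_zero (hS : IsGenOrthSet Q S C) {s : V}
    (hs : polar Q s s ≠ 0) : ∀ p ∈ C, p.1 ≠ s ∧ p.2 ≠ s := by
  intro p hp
  obtain ⟨-, -, -, h1, h2, -⟩ := hS.1 p hp
  exact ⟨fun h => hs (h ▸ h1), fun h => hs (h ▸ h2)⟩

theorem polar_fst_eq_zero (hS : IsGenOrthSet Q S C) {p : V × V} (hp : p ∈ C) {s : V}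
    (hs : s ∈ S) (h1 : s ≠ p.1) (h2 : s ≠ p.2) : polar Q s p.1 = 0 := by
  refine hS.2.2 s hs p.1 (hS.1 p hp).1 h1 (fun h => ?_) (fun h => ?_)
  · exact (hS.2.1 _ h p hp (fun he => h1 (congrArg Prod.fst he))).2.2.1 rfl
  · exact (hS.2.1 _ h p hp (fun he => h2 (congrArg Prod.snd he))).1 rfl

theorem polar_snd_eq_zero (hS : IsGenOrthSet Q S C) {p : V × V} (hp : p ∈ C) {s : V}
    (hs : s ∈ S) (h1 : s ≠ p.1) (h2 : s ≠ p.2) : polar Q s p.2 = 0 := by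
  refine hS.2.2 s hs p.2 (hS.1 p hp).2.1 h2 (fun h => ?_) (fun h => ?_)
  · exact (hS.2.1 _ h p hp (fun he => h1 (congrArg Prod.fst he))).2.2.2 rfl
  · exact (hS.2.1 _ h p hp (fun he => h2 (congrArg Prod.snd he))).2.1 rfl

theorem exists_partner (hS : IsGenOrthSet Q S C)
    (hpaired : ∀ s ∈ S, polar Q s s = 0 → ∃ p ∈ C, p.1 = s ∨ p.2 = s) {s : V} (hs : s ∈ S) :
    ∃ t ∈ S, polar Q s t ≠ 0 ∧ ∀ s' ∈ S, s' ≠ s → polar Q s' t = 0 := by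
  by_cases hss : polar Q s s = 0
  · obtain ⟨p, hp, rfl | rfl⟩ := hpaired s hs hss
    all_goals obtain ⟨hp1, hp2, hne, hq1, hq2, hq12⟩ := hS.1 p hp
    · refine ⟨p.2, hp2, by simp [hq12], fun s' hs' h1 => ?_⟩
      rcases eq_or_ne s' p.2 with rfl | h2
      · exact hq2
      · exact hS.polar_snd_eq_zero hp hs' h1 h2
    · refine ⟨p.1, hp1, by simp [polar_comm, hq12], fun s' hs' h2 => ?_⟩
      rcases eq_or_ne s' p.1 with rfl | h1
      · exact hq1
      · exact hS.polar_fst_eq_zero hp hs' h1 h2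
  · exact ⟨s, hs, hss, fun s' hs' hne =>
      hS.polar_eq_zero_of_unpaired hs' hs hne (hS.unpaired_of_polar_self_ne_zero hss)⟩

theorem disjoint_span_orthogonal (hS : IsGenOrthSet Q S C)
    (hpaired : ∀ s ∈ S, polar Q s s = 0 → ∃ p ∈ C, p.1 = s ∨ p.2 = s) :
    Disjoint (span K S) (LinearMap.BilinForm.orthogonal (polarBilin Q) (span K S)) := by
  rw [disjoint_def]
  intro x hx hxo
  refine LinearMap.BilinForm.eq_zero_of_mem_span_of_forall_exists_partner (B := polarBilin Q)
    (fun s hs => hS.exists_partner hpaired hs) hx fun t ht => ?_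
  rw [polarBilin_apply_apply, polar_comm]
  exact hxo t (subset_span ht)

theorem insert_of_forall_polar_eq_zero (hS : IsGenOrthSet Q S C) {w : V}
    (hw : ∀ s ∈ S, polar Q w s = 0) : IsGenOrthSet Q (insert w S) C := by
  refine ⟨fun p hp => ?_, hS.2.1, ?_⟩
  · obtain ⟨h1, h2, h⟩ := hS.1 p hp
    exact ⟨Set.mem_insert_of_mem _ h1, Set.mem_insert_of_mem _ h2, h⟩
  · rintro u (rfl | hu) v (rfl | hv) hne hC hC'
    · exact absurd rfl hne
    · exact hw v hv
    · rw [polar_comm]; exact hw u hu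
    · exact hS.2.2 u hu v hv hne hC hC'

theorem insert_couple (hS : IsGenOrthSet Q S C) {x y : V} (hx : x ∈ S)
    (hxC : ∀ p ∈ C, p.1 ≠ x ∧ p.2 ≠ x) (hy : y ∉ S) (hxx : polar Q x x = 0)
    (hyy : polar Q y y = 0) (hxy : polar Q x y = 1) (hyS : ∀ s ∈ S, s ≠ x → polar Q y s = 0) :
    IsGenOrthSet Q (insert y S) (insert (x, y) C) := by
  have hmem {p : V × V} (hp : p ∈ C) : p.1 ≠ y ∧ p.2 ≠ y :=
    ⟨fun h => hy (h ▸ (hS.1 p hp).1), fun h => hy (h ▸ (hS.1 p hp).2.1)⟩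
  refine ⟨?_, ?_, ?_⟩
  · rintro p (rfl | hp)
    · exact ⟨Set.mem_insert_of_mem _ hx, Set.mem_insert _ _, fun h : x = y => hy (h ▸ hx), hxx,
        hyy, hxy⟩
    · obtain ⟨h1, h2, h⟩ := hS.1 p hp
      exact ⟨Set.mem_insert_of_mem _ h1, Set.mem_insert_of_mem _ h2, h⟩
  · rintro p (rfl | hp) q (rfl | hq) hne
    · exact absurd rfl hne
    · exact ⟨(hxC q hq).1.symm, (hxC q hq).2.symm, (hmem hq).1.symm, (hmem hq).2.symm⟩
    · exact ⟨(hxC p hp).1, (hmem hp).1, (hxC p hp).2, (hmem hp).2⟩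
    · exact hS.2.1 p hp q hq hne
  · rintro u (rfl | hu) v (rfl | hv) hne hC hC'
    · exact absurd rfl hne
    · rcases eq_or_ne v x with rfl | hvx
      · exact absurd (Set.mem_insert _ _) hC'
      · exact hyS v hv hvx
    · rcases eq_or_ne u x with rfl | hux
      · exact absurd (Set.mem_insert _ _) hC
      · rw [polar_comm]; exact hyS u hu hux
    · exact hS.2.2 u hu v hv hne (fun h => hC (Set.mem_insert_of_mem _ h))
        (fun h => hC' (Set.mem_insert_of_mem _ h))

end IsGenOrthSet

section Extension

variable {K V : Type*} [Field K] [AddCommGroup V] [Module K V] [FiniteDimensional K V]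
  {Q : QuadraticForm K V}

theorem QuadraticMap.exists_isotropic_partner
    (hnd : ∀ v : V, (∀ u : V, polar Q v u = 0) → v = 0)
    {S : Set V} (hS : LinearIndependent K ((↑) : S → V)) {x : V} (hx : x ∈ S)
    (hxS : ∀ s ∈ S, polar Q x s = 0) :
    ∃ y : V, polar Q y y = 0 ∧ polar Q x y = 1 ∧ ∀ s ∈ S, s ≠ x → polar Q y s = 0 := by
  obtain ⟨y, hyx, hyS⟩ :=
    (nondegenerate_polarBilin Q hnd).exists_apply_eq_one_of_linearIndependent hS hx
  simp only [polarBilin_apply_apply] at hyx hyS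
  refine ⟨y - Q y • x, ?_, ?_, fun s hs hsx => ?_⟩
  · rw [polar_sub_left, polar_sub_right, polar_sub_right, polar_smul_left, polar_smul_left,
      polar_smul_right, polar_smul_right, polar_comm Q x y, hyx, hxS x hx, polar_self]
    simp only [smul_eq_mul, nsmul_eq_mul]
    ring
  · rw [polar_sub_right, polar_smul_right, hxS x hx, polar_comm, hyx]
    simp
  · rw [polar_sub_left, polar_smul_left, hyS s hs hsx, hxS s hs]
    simp

theorem IsGenOrthSet.exists_insert_notMem_span
    (hnd : ∀ v : V, (∀ u : V, polar Q v u = 0) → v = 0)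
    {S : Set V} {C : Set (V × V)} (hSind : LinearIndependent K ((↑) : S → V))
    (hS : IsGenOrthSet Q S C) (hspan : span K S ≠ ⊤) :
    ∃ v ∉ span K S, ∃ C', C ⊆ C' ∧ IsGenOrthSet Q (insert v S) C' := by
  by_cases hunpaired : ∃ x ∈ S, polar Q x x = 0 ∧ ∀ p ∈ C, p.1 ≠ x ∧ p.2 ≠ x
  · obtain ⟨x, hx, hxx, hxC⟩ := hunpaired
    have hxS : ∀ s ∈ S, polar Q x s = 0 := fun s hs => by
      rcases eq_or_ne s x with rfl | hsx
      · exact hxx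
      · rw [polar_comm]; exact hS.polar_eq_zero_of_unpaired hs hx hsx hxC
    obtain ⟨y, hyy, hxy, hyS⟩ := exists_isotropic_partner hnd hSind hx hxS
    have hy : y ∉ span K S := fun hy => by
      have hspan_le : span K S ≤ LinearMap.ker (polarBilin Q x) :=
        span_le.mpr fun s hs => by simpa using hxS s hs
      simpa [hxy] using hspan_le hy
    exact ⟨y, hy, insert (x, y) C, Set.subset_insert _ _,
      hS.insert_couple hx hxC (fun h => hy (subset_span h)) hxx hyy hxy hyS⟩
  · have hpaired : ∀ s ∈ S, polar Q s s = 0 → ∃ p ∈ C, p.1 = s ∨ p.2 = s := by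
      intro s hs hss
      by_contra! h
      exact hunpaired ⟨s, hs, hss, h⟩
    obtain ⟨w, hw, hwS⟩ := (nondegenerate_polarBilin Q hnd).exists_mem_orthogonal_notMem hspan
      (hS.disjoint_span_orthogonal hpaired)
    refine ⟨w, hwS, C, subset_rfl, hS.insert_of_forall_polar_eq_zero fun s hs => ?_⟩
    rw [polar_comm, ← polarBilin_apply_apply]
    exact hw s (subset_span hs)

end Extension

theorem stmt4 {K V : Type*} [Field K] [AddCommGroup V] [Module K V]
    [FiniteDimensional K V] (Q : QuadraticForm K V)
    (hnd : ∀ v : V, (∀ u : V, polar Q v u = 0) → v = 0)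
    (S : Set V) (C : Set (V × V))
    (hSind : LinearIndependent K ((↑) : S → V))
    (hS : IsGenOrthSet Q S C) :
    ∃ (T : Set V) (C' : Set (V × V)), S ⊆ T ∧ C ⊆ C' ∧
      IsGenOrthSet Q T C' ∧ LinearIndependent K ((↑) : T → V) ∧
      Submodule.span K T = ⊤ := by
  induction hk : finrank K V - finrank K (span K S) using Nat.strong_induction_on
    generalizing S C with
  | _ n ih =>
    by_cases hspan : span K S = ⊤
    · exact ⟨S, C, subset_rfl, subset_rfl, hS, hSind, hspan⟩
    obtain ⟨v, hv, C', hCC', hS'⟩ := hS.exists_insert_notMem_span hnd hSind hspan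
    have hlt : finrank K (span K S) < finrank K (span K (insert v S)) :=
      finrank_lt_finrank_of_lt ((span_mono (Set.subset_insert v S)).lt_of_not_ge
        fun h => hv (h (subset_span (Set.mem_insert v S))))
    have := finrank_le (span K (insert v S))
    obtain ⟨T, C'', hST, hCT, hT⟩ :=
      ih _ (by omega) (insert v S) C' (LinearIndepOn.id_insert hSind hv) hS' rfl
    exact ⟨T, C'', (Set.subset_insert v S).trans hST, hCC'.trans hCT, hT⟩
end

section
/- Let K be a field with char K ≠ 2, and let (U, Q) be a 3-dimensional quadratic space with Q non-degenerate, and L ∈ U a fixed nonzero vector such that the set of isotropic vectors u ∉ L^⊥ is nonempty. Let Γ̃ be the group of linear isometries of U fixing the vector L, and Γ ≤ Γ̃ the subgroup of isometries with determinant 1. Then Γ acts freely and transitively on the set of isotropic vectors p ∈ U with B(L,p) = 1. -/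
open QuadraticMap Module

section Helpers

variable {K U : Type*} [Field K] [AddCommGroup U] [Module K U]

private lemma qsum14 (Q : QuadraticForm K U) (x y : U) :
    Q (x + y) = Q x + Q y + polar Q x y := by
  simp only [polar]; ring

private lemma polar3right (Q : QuadraticForm K U) (u a b c : U) (α β γ : K) :
    polar Q u (α • a + β • b + γ • c)
      = α * polar Q u a + β * polar Q u b + γ * polar Q u c := by
  rw [polar_add_right, polar_add_right, polar_smul_right, polar_smul_right, polar_smul_right]
  simp [smul_eq_mul]

private lemma qform3 (Q : QuadraticForm K U) (a b c : U) (α β γ : K) :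
    Q (α • a + β • b + γ • c)
      = α * α * Q a + β * β * Q b + γ * γ * Q c
        + α * β * polar Q a b + α * γ * polar Q a c + β * γ * polar Q b c := by
  rw [qsum14, qsum14, polar_add_left, QuadraticMap.map_smul, QuadraticMap.map_smul,
    QuadraticMap.map_smul, polar_smul_left, polar_smul_right, polar_smul_left,
    polar_smul_right, polar_smul_left, polar_smul_right]
  simp only [smul_eq_mul]
  ring

private lemma polar_self_eq (Q : QuadraticForm K U) (x : U) :
    polar Q x x = 2 * Q x := by
  rw [polar_self, two_smul, two_mul]

end Helpers

theorem stmt14 {K U : Type*} [Field K] [AddCommGroup U] [Module K U]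
    [FiniteDimensional K U] (hchar : ringChar K ≠ 2)
    (hdim : finrank K U = 3) (Q : QuadraticForm K U)
    (hnd : ∀ v : U, (∀ u : U, polar Q v u = 0) → v = 0)
    (L : U) (hL : L ≠ 0)
    (hne : ∃ u : U, u ≠ 0 ∧ Q u = 0 ∧ polar Q L u ≠ 0)
    (p₁ p₂ : U) (hp₁ : Q p₁ = 0 ∧ polar Q L p₁ = 1)
    (hp₂ : Q p₂ = 0 ∧ polar Q L p₂ = 1) :
    ∃! f : U ≃ₗ[K] U, (∀ x : U, Q (f x) = Q x) ∧ f L = L ∧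
      LinearMap.det (f : U →ₗ[K] U) = 1 ∧ f p₁ = p₂ := by
  classical
  obtain ⟨hQ1, hB1⟩ := hp₁
  obtain ⟨hQ2, hB2⟩ := hp₂
  set c : K := Q L with hc
  have hBLL : polar Q L L = 2 * c := polar_self_eq Q L
  have hBpp : polar Q p₁ p₁ = 0 := by rw [polar_self_eq, hQ1, mul_zero]
  have hBpL : polar Q p₁ L = 1 := by rw [polar_comm]; exact hB1
  -- p₁ ≠ 0
  have hp₁0 : p₁ ≠ 0 := by
    rintro rfl
    simp only [polar, add_zero, map_zero, sub_zero, sub_self] at hB1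
    exact one_ne_zero hB1.symm
  -- L, p₁ linearly independent
  have hli2 : LinearIndependent K ![L, p₁] := by
    rw [LinearIndependent.pair_iff]
    intro s t hst
    have h1 : polar Q (s • L + t • p₁) p₁ = 0 := by rw [hst, polar_zero_left]
    rw [polar_add_left, polar_smul_left, polar_smul_left, hB1, hBpp, smul_eq_mul,
      smul_eq_mul, mul_one, mul_zero, add_zero] at h1
    subst h1
    rw [zero_smul, zero_add] at hst
    rcases smul_eq_zero.mp hst with h | h
    · exact ⟨rfl, h⟩
    · exact absurd h hp₁0
  -- find v outside the span of L, p₁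
  have hspan : Submodule.span K (Set.range ![L, p₁]) ≠ ⊤ := by
    intro h
    have h2 := finrank_span_eq_card hli2
    rw [h, finrank_top] at h2
    rw [hdim] at h2
    simp at h2
  obtain ⟨v, hv⟩ : ∃ v, v ∉ Submodule.span K (Set.range ![L, p₁]) := by
    by_contra h
    push_neg at h
    exact hspan (Submodule.eq_top_iff'.mpr h)
  -- build w₁ orthogonal to L and p₁
  set α₀ : K := polar Q p₁ v with hα₀
  set β₀ : K := polar Q L v - 2 * c * α₀ with hβ₀
  set w₁ : U := v - α₀ • L - β₀ • p₁ with hw₁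
  have hBLw : polar Q L w₁ = 0 := by
    rw [hw₁, polar_sub_right, polar_sub_right, polar_smul_right, polar_smul_right,
      hBLL, hB1, smul_eq_mul, smul_eq_mul, hβ₀]
    ring
  have hBpw : polar Q p₁ w₁ = 0 := by
    rw [hw₁, polar_sub_right, polar_sub_right, polar_smul_right, polar_smul_right,
      hBpL, hBpp, smul_eq_mul, smul_eq_mul, hα₀]
    ring
  have hLmem : L ∈ Submodule.span K (Set.range ![L, p₁]) :=
    Submodule.subset_span ⟨0, rfl⟩
  have hpmem : p₁ ∈ Submodule.span K (Set.range ![L, p₁]) :=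
    Submodule.subset_span ⟨1, rfl⟩
  have hw₁span : w₁ ∉ Submodule.span K (Set.range ![L, p₁]) := by
    intro h
    apply hv
    have : v = w₁ + α₀ • L + β₀ • p₁ := by rw [hw₁]; abel
    rw [this]
    exact Submodule.add_mem _ (Submodule.add_mem _ h (Submodule.smul_mem _ _ hLmem))
      (Submodule.smul_mem _ _ hpmem)
  have hli3 : LinearIndependent K ![L, p₁, w₁] := by
    have hsnoc : ![L, p₁, w₁] = Fin.snoc ![L, p₁] w₁ := by
      funext i
      fin_cases i <;> rfl
    rw [hsnoc, linearIndependent_fin_snoc]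
    exact ⟨hli2, hw₁span⟩
  have hw₁0 : w₁ ≠ 0 := by
    rintro h
    rw [h] at hw₁span
    exact hw₁span (Submodule.zero_mem _)
  -- the basis
  have hcard : Fintype.card (Fin 3) = finrank K U := by rw [hdim]; simp
  set b : Basis (Fin 3) K U := basisOfLinearIndependentOfCardEqFinrank hli3 hcard with hbdef
  have hb : ⇑b = ![L, p₁, w₁] := coe_basisOfLinearIndependentOfCardEqFinrank hli3 hcard
  have hb0 : b 0 = L := by rw [hb]; rfl
  have hb1 : b 1 = p₁ := by rw [hb]; rfl
  have hb2 : b 2 = w₁ := by rw [hb]; rfl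
  have hrepr : ∀ u : U, u = b.repr u 0 • L + b.repr u 1 • p₁ + b.repr u 2 • w₁ := by
    intro u
    have h := b.sum_repr u
    rw [Fin.sum_univ_three, hb0, hb1, hb2] at h
    exact h.symm
  -- d = Q w₁ ≠ 0
  set d : K := Q w₁ with hd
  have hBww : polar Q w₁ w₁ = 2 * d := polar_self_eq Q w₁
  have hBwL : polar Q w₁ L = 0 := by rw [polar_comm]; exact hBLw
  have hBwp : polar Q w₁ p₁ = 0 := by rw [polar_comm]; exact hBpw
  have hd0 : d ≠ 0 := by
    intro h0
    apply hw₁0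
    apply hnd
    intro u
    rw [hrepr u, polar3right, hBwL, hBwp, hBww, h0]
    ring
  -- coordinates of p₂
  set x : K := b.repr p₂ 0 with hx
  set y : K := b.repr p₂ 1 with hy'
  set z : K := b.repr p₂ 2 with hz'
  have hp2 : p₂ = x • L + y • p₁ + z • w₁ := hrepr p₂
  have hyx : 2 * c * x + y = 1 := by
    have h := hB2
    rw [hp2, polar3right, hBLL, hB1, hBLw] at h
    linear_combination h
  have hzx : c * x * x + x * y + d * z * z = 0 := by
    have h := hQ2
    rw [hp2, qform3, hQ1, ← hc, ← hd, hB1, hBLw, hBpw] at h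
    linear_combination h
  have hkey : y * y - 4 * c * d * (z * z) = 1 := by
    linear_combination (2 * c * x + y + 1) * hyx - 4 * c * hzx
  -- the matrix of the desired transformation
  set M : Matrix (Fin 3) (Fin 3) K := !![1, x, -(2 * d * z); 0, y, 4 * c * d * z; 0, z, y]
    with hM
  have hdetM : M.det = 1 := by
    rw [hM, Matrix.det_fin_three]
    simp [Matrix.vecHead, Matrix.vecTail]
    linear_combination hkey
  set f₀ : U ≃ₗ[K] U := Matrix.toLinearEquiv b M (by rw [hdetM]; exact isUnit_one) with hf₀
  have hf₀lin : (f₀ : U →ₗ[K] U) = Matrix.toLin b b M := rfl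
  have hf₀app : ∀ u : U, f₀ u = Matrix.toLin b b M u := fun u => rfl
  have himg : ∀ j : Fin 3, f₀ (b j) = M 0 j • L + M 1 j • p₁ + M 2 j • w₁ := by
    intro j
    rw [hf₀app, Matrix.toLin_self, Fin.sum_univ_three, hb0, hb1, hb2]
  set w₂ : U := -(2 * d * z) • L + (4 * c * d * z) • p₁ + y • w₁ with hw₂
  have hf₀L : f₀ L = L := by
    have h := himg 0
    rw [hb0] at h
    rw [h, hM]
    simp [Matrix.vecHead, Matrix.vecTail]
  have hf₀p : f₀ p₁ = p₂ := by
    have h := himg 1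
    rw [hb1] at h
    rw [h, hM]
    simp [Matrix.vecHead, Matrix.vecTail]
    exact hp2.symm
  have hf₀w : f₀ w₁ = w₂ := by
    have h := himg 2
    rw [hb2] at h
    rw [h, hM, hw₂]
    simp [Matrix.vecHead, Matrix.vecTail]
  -- Gram data of the image triple (L, p₂, w₂)
  have hBLw₂ : polar Q L w₂ = 0 := by
    rw [hw₂, polar3right, hBLL, hB1, hBLw]
    ring
  have hBp₂L : polar Q p₂ L = 1 := by rw [polar_comm]; exact hB2
  have hBp₂p : polar Q p₂ p₁ = x := by
    rw [polar_comm, hp2, polar3right, hBpL, hBpp, hBpw]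
    ring
  have hBp₂w : polar Q p₂ w₁ = 2 * d * z := by
    rw [polar_comm, hp2, polar3right, hBwL, hBwp, hBww]
    ring
  have hBp₂w₂ : polar Q p₂ w₂ = 0 := by
    rw [hw₂, polar3right, hBp₂L, hBp₂p, hBp₂w]
    linear_combination 2 * d * z * hyx
  have hQw₂ : Q w₂ = d := by
    rw [hw₂, qform3, ← hc, hQ1, ← hd, hB1, hBLw, hBpw]
    linear_combination d * hkey
  -- Q is preserved by f₀
  have hf₀Q : ∀ u : U, Q (f₀ u) = Q u := by
    intro u
    have hu := hrepr u
    set a0 : K := b.repr u 0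
    set a1 : K := b.repr u 1
    set a2 : K := b.repr u 2
    have himgu : f₀ u = a0 • L + a1 • p₂ + a2 • w₂ := by
      rw [hu]
      rw [map_add, map_add, LinearEquiv.map_smul, LinearEquiv.map_smul, LinearEquiv.map_smul, hf₀L, hf₀p, hf₀w]
    rw [himgu, qform3, ← hc, hQ2, hQw₂, hB2, hBLw₂, hBp₂w₂]
    rw [hu, qform3, ← hc, hQ1, ← hd, hB1, hBLw, hBpw]
  have hf₀det : LinearMap.det (f₀ : U →ₗ[K] U) = 1 := by
    rw [hf₀lin, LinearMap.det_toLin, hdetM]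
  refine ⟨f₀, ⟨hf₀Q, hf₀L, hf₀det, hf₀p⟩, ?_⟩
  -- uniqueness
  rintro g ⟨hgQ, hgL, hgdet, hgp⟩
  have hgB : ∀ u w : U, polar Q (g u) (g w) = polar Q u w := by
    intro u w
    simp only [polar, ← map_add, hgQ]
  -- coordinates of g w₁
  set a : K := b.repr (g w₁) 0 with ha
  set bb : K := b.repr (g w₁) 1 with hbb
  set e : K := b.repr (g w₁) 2 with he
  have hgw : g w₁ = a • L + bb • p₁ + e • w₁ := hrepr (g w₁)
  have hF1 : 2 * c * a + bb = 0 := by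
    have h := hgB L w₁
    rw [hgL, hBLw, hgw, polar3right, hBLL, hB1, hBLw] at h
    linear_combination h
  have hF2 : a + bb * x + 2 * d * z * e = 0 := by
    have h := hgB p₁ w₁
    rw [hgp, hBpw, hgw, polar3right, hBp₂L, hBp₂p, hBp₂w] at h
    linear_combination h
  -- determinant of g in the basis b
  have hrL : ∀ i : Fin 3, b.repr L i = (Finsupp.single (0 : Fin 3) (1 : K)) i := by
    intro i
    rw [← hb0, b.repr_self]
  have hdetg : y * e - bb * z = 1 := by
    have h := hgdet
    rw [← LinearMap.det_toMatrix b, Matrix.det_fin_three] at h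
    simp only [LinearMap.toMatrix_apply, LinearEquiv.coe_coe, hb0, hb1, hb2, hgL, hgp] at h
    rw [hrL 0, hrL 1, hrL 2] at h
    rw [Finsupp.single_eq_same, Finsupp.single_eq_of_ne (by decide),
      Finsupp.single_eq_of_ne (by decide)] at h
    rw [← hx, ← hy', ← hz', ← ha, ← hbb, ← he] at h
    linear_combination h
  -- solve for a, bb, e
  have hG2 : a * y + 2 * d * z * e = 0 := by
    linear_combination hF2 - x * hF1 + a * hyx
  have hG3 : y * e + 2 * c * a * z = 1 := by
    linear_combination hdetg + z * hF1
  have hA : a = -(2 * d * z) := by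
    linear_combination y * hG2 - 2 * d * z * hG3 - a * hkey
  have hE : e = y := by
    linear_combination y * hG3 - 2 * c * z * hG2 - e * hkey
  have hBB : bb = 4 * c * d * z := by
    linear_combination hF1 - 2 * c * hA
  have hgw₂ : g w₁ = w₂ := by
    rw [hgw, hA, hE, hBB, hw₂]
  -- conclude g = f₀
  have hbase : ∀ i : Fin 3, g (b i) = f₀ (b i) := by
    intro i
    fin_cases i
    · show g (b 0) = f₀ (b 0)
      rw [hb0, hgL, hf₀L]
    · show g (b 1) = f₀ (b 1)
      rw [hb1, hgp, hf₀p]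
    · show g (b 2) = f₀ (b 2)
      rw [hb2, hgw₂, hf₀w]
  apply LinearEquiv.toLinearMap_injective
  apply b.ext
  intro i
  simpa using hbase i
end

section
/- Let K be a field with char K ≠ 2, and (V, Q, P, L) a non-degenerate universal conformal geometry of dimension 2 (dim V = 5). Then Q is, up to a scalar multiple, isometric to the diagonal form [+1,+1,+1,-1,-1]. -/
open QuadraticMap Module

private lemma ortho_li {K V : Type*} [Field K] [AddCommGroup V] [Module K V]
    (Q : QuadraticForm K V) {n : ℕ} (v : Fin n → V)
    (h : ∀ i j, i ≠ j → polar Q (v i) (v j) = 0)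
    (hQ : ∀ i, (2 : K) * Q (v i) ≠ 0) : LinearIndependent K v := by
  rw [Fintype.linearIndependent_iff]
  intro g hg i
  have h0 : polar Q (∑ j, g j • v j) (v i) = 0 := by rw [hg, polar_zero_left]
  have hsum : polar Q (∑ j, g j • v j) (v i) = ∑ j, g j * polar Q (v j) (v i) := by
    rw [show polar (⇑Q) (∑ j, g j • v j) (v i)
        = (polarBilin Q).flip (v i) (∑ j, g j • v j) from rfl, map_sum]
    refine Finset.sum_congr rfl fun j _ => ?_
    show polar (⇑Q) (g j • v j) (v i) = _
    rw [polar_smul_left, smul_eq_mul]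
  rw [hsum] at h0
  have : ∑ j, g j * polar Q (v j) (v i) = g i * (2 * Q (v i)) := by
    rw [Finset.sum_eq_single i]
    · rw [polar_self]; ring
    · intro j _ hj; rw [h j i hj, mul_zero]
    · intro hi; exact absurd (Finset.mem_univ i) hi
  rw [this] at h0
  exact (mul_eq_zero.mp h0).resolve_right (hQ i)

theorem stmt15 {K V : Type*} [Field K] [AddCommGroup V] [Module K V]
    [FiniteDimensional K V] (hchar : ringChar K ≠ 2)
    (hdim : finrank K V = 5) (Q : QuadraticForm K V)
    (hnd : ∀ v : V, (∀ u : V, polar Q v u = 0) → v = 0)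
    (P L : V) (hP : P ≠ 0) (hL : L ≠ 0) (hPL : polar Q P L = 0)
    (hsympl : ∃ e₁ e₂ e₃ e₄ : V, LinearIndependent K ![e₁, e₂, e₃, e₄] ∧
      Q e₁ = 0 ∧ Q e₂ = 0 ∧ Q e₃ = 0 ∧ Q e₄ = 0 ∧
      polar Q e₁ e₂ = 1 ∧ polar Q e₃ e₄ = 1 ∧
      polar Q e₁ e₃ = 0 ∧ polar Q e₁ e₄ = 0 ∧
      polar Q e₂ e₃ = 0 ∧ polar Q e₂ e₄ = 0) :
    ∃ (a : K), a ≠ 0 ∧ ∃ b : Basis (Fin 5) K V,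
      (∀ i j, i ≠ j → polar Q (b i) (b j) = 0) ∧
      Q (b 0) = a ∧ Q (b 1) = a ∧ Q (b 2) = a ∧
      Q (b 3) = -a ∧ Q (b 4) = -a := by
  classical
  obtain ⟨e₁, e₂, e₃, e₄, hind, hQ1, hQ2, hQ3, hQ4, h12, h34, h13, h14, h23, h24⟩ := hsympl
  have two_ne : (2 : K) ≠ 0 := Ring.two_ne_zero hchar
  have h21 : polar Q e₂ e₁ = 1 := by rw [polar_comm]; exact h12
  have h43 : polar Q e₄ e₃ = 1 := by rw [polar_comm]; exact h34
  have h31 : polar Q e₃ e₁ = 0 := by rw [polar_comm]; exact h13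
  have h41 : polar Q e₄ e₁ = 0 := by rw [polar_comm]; exact h14
  have h32 : polar Q e₃ e₂ = 0 := by rw [polar_comm]; exact h23
  have h42 : polar Q e₄ e₂ = 0 := by rw [polar_comm]; exact h24
  have p11 : polar Q e₁ e₁ = 0 := by rw [polar_self, hQ1, smul_zero]
  have p22 : polar Q e₂ e₂ = 0 := by rw [polar_self, hQ2, smul_zero]
  have p33 : polar Q e₃ e₃ = 0 := by rw [polar_self, hQ3, smul_zero]
  have p44 : polar Q e₄ e₄ = 0 := by rw [polar_self, hQ4, smul_zero]
  -- find w orthogonal to all eᵢ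
  set e : Fin 4 → V := ![e₁, e₂, e₃, e₄] with he
  let f : V →ₗ[K] (Fin 4 → K) := LinearMap.pi fun i => (polarBilin Q).flip (e i)
  have hker : LinearMap.ker f ≠ ⊥ := by
    intro hbot
    have h1 : finrank K (LinearMap.range f) + finrank K (LinearMap.ker f) = finrank K V :=
      f.finrank_range_add_finrank_ker
    rw [hbot, finrank_bot, add_zero, hdim] at h1
    have h2 : finrank K (LinearMap.range f) ≤ finrank K (Fin 4 → K) :=
      Submodule.finrank_le _
    simp [Module.finrank_pi] at h2
    omega
  obtain ⟨w, hwker, hwne⟩ := Submodule.exists_mem_ne_zero_of_ne_bot hker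
  have hw : ∀ i, polar Q w (e i) = 0 := by
    intro i
    have := LinearMap.mem_ker.mp hwker
    exact congrFun this i
  have hw1 : polar Q w e₁ = 0 := hw 0
  have hw2 : polar Q w e₂ = 0 := hw 1
  have hw3 : polar Q w e₃ = 0 := hw 2
  have hw4 : polar Q w e₄ = 0 := hw 3
  have hw1' : polar Q e₁ w = 0 := by rw [polar_comm]; exact hw1
  have hw2' : polar Q e₂ w = 0 := by rw [polar_comm]; exact hw2
  have hw3' : polar Q e₃ w = 0 := by rw [polar_comm]; exact hw3
  have hw4' : polar Q e₄ w = 0 := by rw [polar_comm]; exact hw4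
  -- w ∉ span of the eᵢ
  have hwnot : w ∉ Submodule.span K (Set.range e) := by
    intro hmem
    obtain ⟨c, hc⟩ := Submodule.mem_span_range_iff_exists_fun K |>.mp hmem
    have key : ∀ u : V, polar Q w u = c 0 * polar Q e₁ u + c 1 * polar Q e₂ u
        + c 2 * polar Q e₃ u + c 3 * polar Q e₄ u := by
      intro u
      rw [← hc, Fin.sum_univ_four]
      simp only [he, Matrix.cons_val_zero, Matrix.cons_val_one, Matrix.head_cons,
        Matrix.cons_val_two, Matrix.tail_cons, Matrix.cons_val_three,
        polar_add_left, polar_smul_left, smul_eq_mul]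
    have hc1 : c 0 = 0 := by have := key e₂; rw [hw2, h12, p22, h32, h42] at this; simpa using this.symm
    have hc2 : c 1 = 0 := by have := key e₁; rw [hw1, h21, p11, h31, h41] at this; simpa using this.symm
    have hc3 : c 2 = 0 := by have := key e₄; rw [hw4, h14, h24, h34, p44] at this; simpa using this.symm
    have hc4 : c 3 = 0 := by have := key e₃; rw [hw3, h13, h23, p33, h43] at this; simpa using this.symm
    apply hwne
    rw [← hc, Fin.sum_univ_four, hc1, hc2, hc3, hc4]
    simp
  -- the five vectors w, e₁, ..., e₄ are independent and span
  have li5 : LinearIndependent K ![w, e₁, e₂, e₃, e₄] := by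
    rw [show (![w, e₁, e₂, e₃, e₄]) = Fin.cons w e from rfl, linearIndependent_fin_cons]
    exact ⟨hind, hwnot⟩
  have hspan : Submodule.span K (Set.range ![w, e₁, e₂, e₃, e₄]) = ⊤ := by
    have h := (basisOfLinearIndependentOfCardEqFinrank li5 (by simp [hdim])).span_eq
    rwa [coe_basisOfLinearIndependentOfCardEqFinrank] at h
  -- Q w ≠ 0
  have ha : Q w ≠ 0 := by
    intro h0
    apply hwne
    apply hnd
    intro u
    have hww : polar Q w w = 0 := by rw [polar_self, h0, smul_zero]
    have hext : (polarBilin Q) w = (0 : V →ₗ[K] K) := by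
      apply LinearMap.ext_on hspan
      rintro x ⟨i, rfl⟩
      fin_cases i
      · exact hww
      · exact hw1
      · exact hw2
      · exact hw3
      · exact hw4
    have := congrFun (congrArg (fun g => g.toFun) hext) u
    simpa [polarBilin_apply_apply] using this
  set a : K := Q w with haQ
  -- the orthogonal family
  set v : Fin 5 → V := ![w, e₁ + a • e₂, e₃ + a • e₄, e₁ - a • e₂, e₃ - a • e₄] with hv
  have hQadd : ∀ x y : V, Q (x + y) = Q x + Q y + polar Q x y := by
    intro x y; rw [polar]; ring
  have hQv0 : Q (v 0) = a := rfl
  have hQv1 : Q (v 1) = a := by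
    show Q (e₁ + a • e₂) = a
    rw [hQadd, QuadraticMap.map_smul, polar_smul_right, hQ1, hQ2, h12, smul_eq_mul]; simp
  have hQv2 : Q (v 2) = a := by
    show Q (e₃ + a • e₄) = a
    rw [hQadd, QuadraticMap.map_smul, polar_smul_right, hQ3, hQ4, h34, smul_eq_mul]; simp
  have hQv3 : Q (v 3) = -a := by
    show Q (e₁ - a • e₂) = -a
    rw [sub_eq_add_neg, ← neg_smul, hQadd, QuadraticMap.map_smul, polar_smul_right,
      hQ1, hQ2, h12, smul_eq_mul]; simp
  have hQv4 : Q (v 4) = -a := by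
    show Q (e₃ - a • e₄) = -a
    rw [sub_eq_add_neg, ← neg_smul, hQadd, QuadraticMap.map_smul, polar_smul_right,
      hQ3, hQ4, h34, smul_eq_mul]; simp
  have q01 : polar Q w (e₁ + a • e₂) = 0 := by
    rw [polar_add_right, polar_smul_right, hw1, hw2]; simp
  have q02 : polar Q w (e₃ + a • e₄) = 0 := by
    rw [polar_add_right, polar_smul_right, hw3, hw4]; simp
  have q03 : polar Q w (e₁ - a • e₂) = 0 := by
    rw [polar_sub_right, polar_smul_right, hw1, hw2]; simp
  have q04 : polar Q w (e₃ - a • e₄) = 0 := by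
    rw [polar_sub_right, polar_smul_right, hw3, hw4]; simp
  have q12 : polar Q (e₁ + a • e₂) (e₃ + a • e₄) = 0 := by
    rw [polar_add_left, polar_add_right, polar_add_right, polar_smul_left,
      polar_smul_right, polar_smul_right, polar_smul_left, h13, h14, h23, h24]; simp
  have q13 : polar Q (e₁ + a • e₂) (e₁ - a • e₂) = 0 := by
    rw [polar_add_left, polar_sub_right, polar_sub_right, polar_smul_left,
      polar_smul_right, polar_smul_right, polar_smul_left, p11, p22, h12, h21]; simp
  have q14 : polar Q (e₁ + a • e₂) (e₃ - a • e₄) = 0 := by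
    rw [polar_add_left, polar_sub_right, polar_sub_right, polar_smul_left,
      polar_smul_right, polar_smul_right, polar_smul_left, h13, h14, h23, h24]; simp
  have q23 : polar Q (e₃ + a • e₄) (e₁ - a • e₂) = 0 := by
    rw [polar_add_left, polar_sub_right, polar_sub_right, polar_smul_left,
      polar_smul_right, polar_smul_right, polar_smul_left, h31, h32, h41, h42]; simp
  have q24 : polar Q (e₃ + a • e₄) (e₃ - a • e₄) = 0 := by
    rw [polar_add_left, polar_sub_right, polar_sub_right, polar_smul_left,
      polar_smul_right, polar_smul_right, polar_smul_left, p33, p44, h34, h43]; simp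
  have q34 : polar Q (e₁ - a • e₂) (e₃ - a • e₄) = 0 := by
    rw [polar_sub_left, polar_sub_right, polar_sub_right, polar_smul_left,
      polar_smul_right, polar_smul_right, polar_smul_left, h13, h14, h23, h24]; simp
  have q10 : polar Q (e₁ + a • e₂) w = 0 := by rw [polar_comm]; exact q01
  have q20 : polar Q (e₃ + a • e₄) w = 0 := by rw [polar_comm]; exact q02
  have q30 : polar Q (e₁ - a • e₂) w = 0 := by rw [polar_comm]; exact q03
  have q40 : polar Q (e₃ - a • e₄) w = 0 := by rw [polar_comm]; exact q04
  have q21 : polar Q (e₃ + a • e₄) (e₁ + a • e₂) = 0 := by rw [polar_comm]; exact q12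
  have q31 : polar Q (e₁ - a • e₂) (e₁ + a • e₂) = 0 := by rw [polar_comm]; exact q13
  have q41 : polar Q (e₃ - a • e₄) (e₁ + a • e₂) = 0 := by rw [polar_comm]; exact q14
  have q32 : polar Q (e₁ - a • e₂) (e₃ + a • e₄) = 0 := by rw [polar_comm]; exact q23
  have q42 : polar Q (e₃ - a • e₄) (e₃ + a • e₄) = 0 := by rw [polar_comm]; exact q24
  have q43 : polar Q (e₃ - a • e₄) (e₁ - a • e₂) = 0 := by rw [polar_comm]; exact q34
  have hortho : ∀ i j, i ≠ j → polar Q (v i) (v j) = 0 := by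
    intro i j hij
    fin_cases i <;> fin_cases j <;>
      simp only [hv, Fin.isValue, Matrix.cons_val_zero, Matrix.cons_val_one,
        Matrix.head_cons, Matrix.cons_val_two, Matrix.tail_cons, Matrix.cons_val_three,
        Matrix.cons_val_four, Matrix.head_fin_const, ne_eq, not_true_eq_false] at hij ⊢ <;>
      first
      | exact absurd rfl hij
      | exact hij.elim
      | assumption
  have hanis : ∀ i, (2 : K) * Q (v i) ≠ 0 := by
    intro i
    fin_cases i
    · show (2:K) * Q (v 0) ≠ 0; rw [hQv0]; exact mul_ne_zero two_ne ha
    · show (2:K) * Q (v 1) ≠ 0; rw [hQv1]; exact mul_ne_zero two_ne ha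
    · show (2:K) * Q (v 2) ≠ 0; rw [hQv2]; exact mul_ne_zero two_ne ha
    · show (2:K) * Q (v 3) ≠ 0; rw [hQv3]; exact mul_ne_zero two_ne (neg_ne_zero.mpr ha)
    · show (2:K) * Q (v 4) ≠ 0; rw [hQv4]; exact mul_ne_zero two_ne (neg_ne_zero.mpr ha)
  have liv : LinearIndependent K v := ortho_li Q v hortho hanis
  refine ⟨a, ha, basisOfLinearIndependentOfCardEqFinrank liv (by simp [hdim]), ?_, ?_, ?_, ?_, ?_, ?_⟩ <;>
    simp only [coe_basisOfLinearIndependentOfCardEqFinrank]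
  · exact hortho
  · exact hQv0
  · exact hQv1
  · exact hQv2
  · exact hQv3
  · exact hQv4
end
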